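/- Let F : ℝⁿ → ℝⁿ be continuous, let h : ℝⁿ → ℝ be continuously differentiable, define C := {x ∈ ℝⁿ : h(x) ≥ 0}, and let α : ℝ → ℝ be an extended class-K function that is locally Lipschitz. Suppose there is an open set D ⊇ C such that ⟨∇h(x), F(x)⟩ ≥ −α(h(x)) for all x ∈ D. Then every solution x(·) of ẋ = F(x) on [0,∞) with x(0) ∈ C satisfies x(t) ∈ C for all t ≥ 0 (C is forward invariant). -/

import Mathlib

/-!
Along a solution, `y = h ∘ x` has derivative `⟪∇h(x), F(x)⟫`. Whenever `y(σ) ≥ 0` the state lies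
in the open set `D`, hence stays there for a short time, and on that stretch `y' ≥ -α(y) ≥ 0`
wherever `y < 0`, so `y` cannot become negative. Continuous induction on `[0, t]` finishes.
-/

open scoped RealInnerProductSpace

/-- An extended class-K function: continuous, strictly increasing, vanishing at `0`. -/
def IsClassKe (α : ℝ → ℝ) : Prop :=
  Continuous α ∧ StrictMono α ∧ α 0 = 0

open Set Filter Topology

theorem HasGradientAt.comp_hasDerivAt {E : Type*} [NormedAddCommGroup E]
    [InnerProductSpace ℝ E] [CompleteSpace E] {h : E → ℝ} {h' v : E} {x : ℝ → E} {t : ℝ}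
    (hh : HasGradientAt h h' (x t)) (hx : HasDerivAt x v t) :
    HasDerivAt (h ∘ x) ⟪h', v⟫ t := by
  simpa using hh.hasFDerivAt.comp_hasDerivAt t hx

/-- The comparison function `ε (u - a + 1)` stays strictly above `-y`, because `-y` cannot
increase while it is positive; letting `ε → 0` gives `-y ≤ 0`. -/
theorem image_nonneg_of_deriv_right_nonneg_of_neg {y y' : ℝ → ℝ} {a b : ℝ}
    (hy : ContinuousOn y (Icc a b)) (hy' : ∀ u ∈ Ico a b, HasDerivWithinAt y (y' u) (Ici u) u)
    (ha : 0 ≤ y a) (bound : ∀ u ∈ Ico a b, y u < 0 → 0 ≤ y' u) :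
    ∀ ⦃u⦄, u ∈ Icc a b → 0 ≤ y u := by
  intro u hu
  have hfence : ∀ ε > 0, -y u ≤ ε * (u - a + 1) := fun ε hε =>
    image_le_of_deriv_right_lt_deriv_boundary (B := fun u => ε * (u - a + 1)) (B' := fun _ => ε)
      hy.neg (fun u hu => (hy' u hu).neg)
      (by simp only [Pi.neg_apply, sub_self, zero_add, mul_one]; linarith)
      (fun u => by simpa using ((hasDerivAt_id u).sub_const a |>.add_const 1).const_mul ε)
      (fun v hv (heq : -y v = ε * (v - a + 1)) => by
        have hyv : y v < 0 := by nlinarith [hv.1]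
        linarith [bound v hv hyv])
      hu
  have hlim : Tendsto (fun ε : ℝ => ε * (u - a + 1)) (𝓝[>] 0) (𝓝 0) :=
    ((continuous_mul_const _).tendsto' 0 0 (zero_mul _)).mono_left nhdsWithin_le_nhds
  exact neg_nonpos.1 (ge_of_tendsto hlim (eventually_nhdsWithin_of_forall hfence))

theorem cbf_forward_invariance_general {n : ℕ}
    (F : EuclideanSpace ℝ (Fin n) → EuclideanSpace ℝ (Fin n))
    (h : EuclideanSpace ℝ (Fin n) → ℝ) (hh : ContDiff ℝ 1 h)
    (α : ℝ → ℝ) (hα : IsClassKe α)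
    (D : Set (EuclideanSpace ℝ (Fin n))) (hD : IsOpen D)
    (hCD : {x : EuclideanSpace ℝ (Fin n) | 0 ≤ h x} ⊆ D)
    (hbarrier : ∀ x ∈ D, ⟪gradient h x, F x⟫ ≥ -α (h x)) :
    ∀ x : ℝ → EuclideanSpace ℝ (Fin n),
      (∀ t : ℝ, 0 ≤ t → HasDerivAt x (F (x t)) t) →
      x 0 ∈ {y : EuclideanSpace ℝ (Fin n) | 0 ≤ h y} →
      ∀ t : ℝ, 0 ≤ t → x t ∈ {y : EuclideanSpace ℝ (Fin n) | 0 ≤ h y} := by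
  intro x hx hx0 t ht
  have hhx : ∀ s, 0 ≤ s → HasDerivAt (h ∘ x) ⟪gradient h (x s), F (x s)⟫ s := fun s hs =>
    ((hh.differentiable one_ne_zero) (x s)).hasGradientAt.comp_hasDerivAt (hx s hs)
  have hclosed : IsClosed ((h ∘ x) ⁻¹' Ici 0 ∩ Icc 0 t) := by
    rw [inter_comm]
    exact ContinuousOn.preimage_isClosed_of_isClosed
      (fun s hs => (hhx s hs.1).continuousAt.continuousWithinAt) isClosed_Icc isClosed_Ici
  refine hclosed.Icc_subset_of_forall_mem_nhdsWithin hx0 ?_ ⟨ht, le_rfl⟩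
  rintro σ ⟨hσC, hσ, -⟩
  obtain ⟨b, hσb, hbD⟩ := mem_nhdsGE_iff_exists_Icc_subset.1 <| nhdsWithin_le_nhds <|
    (hx σ hσ).continuousAt.preimage_mem_nhds (hD.mem_nhds (hCD hσC))
  refine mem_of_superset (Ioc_mem_nhdsGT hσb) fun u hu => ?_
  refine image_nonneg_of_deriv_right_nonneg_of_neg (y := h ∘ x)
    (fun s hs => (hhx s (hσ.trans hs.1)).continuousAt.continuousWithinAt)
    (fun s hs => (hhx s (hσ.trans hs.1)).hasDerivWithinAt) hσC
    (fun s hs (hneg : h (x s) < 0) => ?_) (Ioc_subset_Icc_self hu)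
  calc (0 : ℝ) ≤ -α (h (x s)) := by linarith [hα.2.1.monotone hneg.le, hα.2.2]
    _ ≤ _ := hbarrier _ (hbD (Ico_subset_Icc_self hs))

/-- Lemma 3 (control barrier function forward invariance, closed-loop form):
if `⟨∇h(x), F(x)⟩ ≥ -α(h(x))` on a neighborhood of `C = {h ≥ 0}`, then `C` is
forward invariant for `ẋ = F(x)`. -/
theorem cbf_forward_invariance {n : ℕ}
    (F : EuclideanSpace ℝ (Fin n) → EuclideanSpace ℝ (Fin n))
    (hF : Continuous F)
    (h : EuclideanSpace ℝ (Fin n) → ℝ) (hh : ContDiff ℝ 1 h)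
    (α : ℝ → ℝ) (hα : IsClassKe α) (hαlip : LocallyLipschitz α)
    (D : Set (EuclideanSpace ℝ (Fin n))) (hD : IsOpen D)
    (hCD : {x : EuclideanSpace ℝ (Fin n) | 0 ≤ h x} ⊆ D)
    (hbarrier : ∀ x ∈ D, ⟪gradient h x, F x⟫ ≥ -α (h x)) :
    ∀ x : ℝ → EuclideanSpace ℝ (Fin n),
      (∀ t : ℝ, 0 ≤ t → HasDerivAt x (F (x t)) t) →
      x 0 ∈ {y : EuclideanSpace ℝ (Fin n) | 0 ≤ h y} →
      ∀ t : ℝ, 0 ≤ t → x t ∈ {y : EuclideanSpace ℝ (Fin n) | 0 ≤ h y} :=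
  cbf_forward_invariance_general F h hh α hα D hD hCD hbarrier
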